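/- arXiv:1508.04202 — 6 statements merged into one kernel-verified Lean document; each statement's English description precedes it below -/
import Mathlib

section
/- Let R be a commutative ring and let f₁, …, fₙ be elements of R. The map R → Rⁿ sending r to (r·f₁, …, r·fₙ) is injective if and only if the canonical map from R to the product of the localizations R[1/f₁] × ⋯ × R[1/fₙ] is injective. -/
/-!
If `fᵢ ^ mᵢ * r = 0` for every `i`, each `fᵢ` lies in the radical of the annihilator of `r`, so
some power `I ^ N` of the finitely generated ideal `I = (f₁, …, fₙ)` annihilates `r`. When no
nonzero element is killed by `I`, one factor of `I` can be peeled off at a time: if `I ^ (k+1)`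
kills `r`, then for `x ∈ I ^ k` the element `x * r` is killed by `I`, hence is zero. So `r = 0`.
-/

open Submodule

section Annihilator

variable {R M : Type*} [CommSemiring R] [AddCommMonoid M] [Module R M]

theorem Submodule.eq_zero_of_pow_le_annihilator_span_singleton {I : Ideal R}
    (hI : ∀ m : M, I ≤ (R ∙ m).annihilator → m = 0) (k : ℕ) {m : M}
    (hm : I ^ k ≤ (R ∙ m).annihilator) : m = 0 := by
  induction k generalizing m with
  | zero => simpa using hm
  | succ k ih =>
    refine ih fun x hx => (mem_annihilator_span_singleton _ _).2 <| hI _ fun y hy => ?_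
    rw [mem_annihilator_span_singleton, smul_smul, ← mem_annihilator_span_singleton]
    exact hm (pow_succ I k ▸ mul_comm x y ▸ Ideal.mul_mem_mul hx hy)

theorem Submodule.eq_zero_of_forall_pow_smul_eq_zero {ι : Type*} [Finite ι] {f : ι → R}
    (hf : ∀ m : M, (∀ i, f i • m = 0) → m = 0) {m : M}
    (hm : ∀ i, ∃ k : ℕ, f i ^ k • m = 0) : m = 0 := by
  have hI : ∀ m' : M, Ideal.span (Set.range f) ≤ (R ∙ m').annihilator → m' = 0 :=
    fun m' h => hf m' fun i =>
      (mem_annihilator_span_singleton _ _).1 (h (Ideal.subset_span ⟨i, rfl⟩))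
  have hrad : Ideal.span (Set.range f) ≤ (R ∙ m).annihilator.radical :=
    Ideal.span_le.2 <| Set.range_subset_iff.2 fun i =>
      (hm i).imp fun _ => (mem_annihilator_span_singleton _ _).2
  obtain ⟨N, hN⟩ := Ideal.exists_pow_le_of_le_radical_of_fg hrad (fg_span (Set.finite_range f))
  exact eq_zero_of_pow_le_annihilator_span_singleton hI N hN

end Annihilator

section Localization

variable {R ι : Type*} [CommRing R] (f : ι → R)

theorem injective_mul_right_pi_iff :
    Function.Injective (fun r : R => fun i => r * f i) ↔
      ∀ r : R, (∀ i, f i * r = 0) → r = 0 := by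
  refine (injective_iff_map_eq_zero
    (AddMonoidHom.pi fun i => AddMonoidHom.mulRight (f i))).trans ?_
  simp [funext_iff, mul_comm]

theorem Localization.algebraMap_away_eq_zero_iff (x r : R) :
    algebraMap R (Localization.Away x) r = 0 ↔ ∃ m : ℕ, x ^ m * r = 0 := by
  simp [IsLocalization.map_eq_zero_iff (Submonoid.powers x), Submonoid.mem_powers_iff]

theorem injective_algebraMap_away_pi_iff :
    Function.Injective (fun r : R => fun i => algebraMap R (Localization.Away (f i)) r) ↔
      ∀ r : R, (∀ i, ∃ m : ℕ, f i ^ m * r = 0) → r = 0 := by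
  refine (injective_iff_map_eq_zero
    (RingHom.pi fun i => algebraMap R (Localization.Away (f i)))).trans ?_
  simp [funext_iff, Localization.algebraMap_away_eq_zero_iff]

end Localization

/-- Let `R` be a commutative ring and `f₁, …, fₙ ∈ R`. The map `R → Rⁿ`,
`r ↦ (r·f₁, …, r·fₙ)` is injective if and only if the canonical map from `R` to the
product of the localizations `R[1/f₁] × ⋯ × R[1/fₙ]` is injective. -/
theorem schematic_density_criterion {R : Type*} [CommRing R] {n : ℕ} (f : Fin n → R) :
    Function.Injective (fun r : R => fun i : Fin n => r * f i) ↔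
    Function.Injective
      (fun r : R => fun i : Fin n => algebraMap R (Localization.Away (f i)) r) := by
  rw [injective_mul_right_pi_iff, injective_algebraMap_away_pi_iff]
  exact ⟨fun hf r hr => eq_zero_of_forall_pow_smul_eq_zero (f := f) hf hr,
    fun h r hr => h r fun i => ⟨1, (pow_one (f i)).symm ▸ hr i⟩⟩
end

section
/- Let R be a commutative ring, M an R-module, n a natural number, and v₁, …, v₂ₙ elements of M. In the exterior algebra ⋀(M) over R, the element ω = Σ_{i=1}^{n} ι(vᵢ)·ι(v_{n+i}) (where ι : M → ⋀(M) is the canonical inclusion and · is the algebra product) satisfies ω^{n+1} = 0. -/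
/-!
Each summand `ι(vᵢ)·ι(v_{n+i})` has square zero, and the summands commute with each other, since
moving `ι z` past a product `ι x · ι y` costs two signs. A sum of `n` pairwise commuting
elements of square zero has vanishing `(n+1)`-st power: in the binomial expansion of
`(a + s)^(k+1)`, every term has either `a²` or `s^k` as a factor.
-/

theorem Finset.sum_pow_card_succ_eq_zero_of_sq_eq_zero {α A : Type*} [Semiring A]
    (s : Finset α) (a : α → A) (hcomm : ∀ i ∈ s, ∀ j ∈ s, Commute (a i) (a j))
    (hsq : ∀ i ∈ s, a i ^ 2 = 0) :
    (∑ i ∈ s, a i) ^ (s.card + 1) = 0 := by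
  induction s using Finset.cons_induction with
  | empty => simp
  | cons x t hx ih =>
    have hcomm_t : ∀ i ∈ t, ∀ j ∈ t, Commute (a i) (a j) := fun i hi j hj =>
      hcomm i (mem_cons_of_mem hi) j (mem_cons_of_mem hj)
    have hx_t : Commute (a x) (∑ i ∈ t, a i) :=
      Commute.sum_right _ _ _ fun j hj => hcomm x (mem_cons_self x t) j (mem_cons_of_mem hj)
    rw [sum_cons, card_cons]
    exact hx_t.add_pow_eq_zero_of_add_le_succ_of_pow_eq_zero (hsq x (mem_cons_self x t))
      (ih hcomm_t fun i hi => hsq i (mem_cons_of_mem hi)) (by omega)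

namespace ExteriorAlgebra

variable {R : Type*} [CommRing R] {M : Type*} [AddCommGroup M] [Module R M]

theorem ι_mul_ι_eq_neg_swap (x y : M) : ι R x * ι R y = -(ι R y * ι R x) :=
  eq_neg_of_add_eq_zero_left (ι_add_mul_swap x y)

theorem commute_ι_mul_ι_ι (x y z : M) : Commute (ι R x * ι R y) (ι R z) := by
  rw [Commute, SemiconjBy, mul_assoc, ι_mul_ι_eq_neg_swap y z, mul_neg, ← mul_assoc,
    ι_mul_ι_eq_neg_swap x z, neg_mul, neg_neg, mul_assoc]

theorem commute_ι_mul_ι (x y z w : M) : Commute (ι R x * ι R y) (ι R z * ι R w) :=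
  (commute_ι_mul_ι_ι x y z).mul_right (commute_ι_mul_ι_ι x y w)

theorem ι_mul_ι_sq (x y : M) : (ι R x * ι R y) ^ 2 = 0 := by
  rw [sq, ← mul_assoc, (commute_ι_mul_ι_ι x y x).eq, ← mul_assoc, ι_sq_zero, zero_mul, zero_mul]

end ExteriorAlgebra

/-- In the exterior algebra of a module `M` over a commutative ring `R`, for elements
`v₁, …, v₂ₙ ∈ M`, the element `ω = Σ_{i=1}^{n} ι(vᵢ)·ι(v_{n+i})` satisfies `ω^(n+1) = 0`. -/
theorem exteriorAlgebra_sum_pairs_pow_succ_eq_zero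
    {R : Type*} [CommRing R] {M : Type*} [AddCommGroup M] [Module R M]
    (n : ℕ) (v : Fin (2 * n) → M) :
    (∑ i : Fin n,
        ExteriorAlgebra.ι R (v ⟨i.val, by have := i.isLt; omega⟩) *
          ExteriorAlgebra.ι R (v ⟨n + i.val, by have := i.isLt; omega⟩)) ^ (n + 1)
      = 0 := by
  simpa using (Finset.univ : Finset (Fin n)).sum_pow_card_succ_eq_zero_of_sq_eq_zero _
    (fun _ _ _ _ => ExteriorAlgebra.commute_ι_mul_ι (R := R) (M := M) _ _ _ _)
    (fun _ _ => ExteriorAlgebra.ι_mul_ι_sq _ _)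
end

section
/- Let n be a natural number, let R be a commutative ℚ-algebra, let x ∈ R be a unit, and let s ∈ R satisfy s^{n+1} = 0. Define Δ = x · Σ_{k=0}^{n} c_k (s·x⁻²)^k ∈ R, where c_k ∈ ℚ is the generalized binomial coefficient (1/2 choose k). Then Δ^{2n+1} = Σ_{k=0}^{n} d_k x^{2n+1−2k} s^k, where d_k ∈ ℚ is the generalized binomial coefficient (n + 1/2 choose k); in particular Δ^{2n+1} is given by an expression involving only nonnegative powers of x. -/
/-!
With `u = s x⁻²` we have `Δ = x · trunc_{n+1} (1 + X)^{1/2} (u)`, and `u^{n+1} = 0`, so only the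
class of the truncated series modulo `X^{n+1}` matters. Truncation modulo `X^{n+1}` is
multiplicative and `((1 + X)^a)^j = (1 + X)^{j a}` as binomial power series, hence
`(Δ / x)^{2n+1} = trunc_{n+1} (1 + X)^{n+1/2} (u)`. Multiplying back by `x^{2n+1}` leaves only
nonnegative powers of `x`, because `2k ≤ 2n+1` for `k ≤ n`.
-/

/-- The generalized binomial coefficient `(a choose k) = (∏_{i=0}^{k-1} (a − i))/k!` in `ℚ`. -/
def ratChoose (a : ℚ) (k : ℕ) : ℚ :=
  (∏ i ∈ Finset.range k, (a - i)) / (Nat.factorial k)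

open Finset Polynomial PowerSeries

theorem ratChoose_eq_ringChoose (a : ℚ) (k : ℕ) : ratChoose a k = Ring.choose a k := by
  rw [ratChoose, Ring.choose_eq_smul, ← aeval_eq_smeval, aeval_def, eval₂_eq_eval_map,
    descPochhammer_map, descPochhammer_eval_eq_prod_range, smul_eq_mul, div_eq_inv_mul]

theorem PowerSeries.binomialSeries_nsmul {R A : Type*} [CommRing R] [BinomialRing R] [Ring A]
    [Algebra R A] (j : ℕ) (r : R) :
    binomialSeries A (j • r) = binomialSeries A r ^ j := by
  induction j with
  | zero => simp
  | succ j ih => rw [succ_nsmul, binomialSeries_add, ih, pow_succ]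

theorem Polynomial.aeval_trunc_coe_of_pow_eq_zero {R A : Type*} [CommRing R] [Ring A]
    [Algebra R A] {u : A} {m : ℕ} (hu : u ^ m = 0) (p : R[X]) :
    aeval u (trunc m (p : R⟦X⟧)) = aeval u p := by
  have hdvd : X ^ m ∣ p - trunc m (p : R⟦X⟧) := by
    refine X_pow_dvd_iff.2 fun d hd => ?_
    rw [coeff_sub, coeff_trunc, if_pos hd, coeff_coe, sub_self]
  obtain ⟨q, hq⟩ := hdvd
  rw [← sub_eq_zero, ← map_sub, ← neg_sub, map_neg, hq, map_mul, map_pow, aeval_X, hu,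
    zero_mul, neg_zero]

section TruncatedBinomialSeries

variable {R : Type*} [Ring R] [Algebra ℚ R]

theorem aeval_trunc_binomialSeries (m : ℕ) (a : ℚ) (u : R) :
    aeval u (trunc m (binomialSeries ℚ a)) =
      ∑ k ∈ range m, algebraMap ℚ R (ratChoose a k) * u ^ k := by
  simp only [aeval_def, eval₂_trunc_eq_sum_range, binomialSeries_coeff, smul_eq_mul, mul_one,
    ratChoose_eq_ringChoose]

theorem sum_ratChoose_pow_of_pow_eq_zero {m : ℕ} {u : R} (hu : u ^ m = 0) (j : ℕ) (a : ℚ) :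
    (∑ k ∈ range m, algebraMap ℚ R (ratChoose a k) * u ^ k) ^ j =
      ∑ k ∈ range m, algebraMap ℚ R (ratChoose (j • a) k) * u ^ k := by
  rw [← aeval_trunc_binomialSeries, ← aeval_trunc_binomialSeries, ← map_pow,
    ← aeval_trunc_coe_of_pow_eq_zero hu, Polynomial.coe_pow, trunc_trunc_pow,
    binomialSeries_nsmul]

end TruncatedBinomialSeries

theorem IsUnit.pow_mul_mul_inv_sq_pow {R : Type*} [CommRing R] {x : R} (hx : IsUnit x) (s : R)
    {N k : ℕ} (hk : 2 * k ≤ N) :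
    x ^ N * (s * ((hx.unit⁻¹ : Rˣ) : R) ^ 2) ^ k = x ^ (N - 2 * k) * s ^ k := by
  obtain ⟨N, rfl⟩ := Nat.exists_eq_add_of_le hk
  calc x ^ (2 * k + N) * (s * ((hx.unit⁻¹ : Rˣ) : R) ^ 2) ^ k
      = x ^ N * s ^ k * (x * ((hx.unit⁻¹ : Rˣ) : R)) ^ (2 * k) := by ring
    _ = x ^ (2 * k + N - 2 * k) * s ^ k := by
      rw [hx.mul_val_inv, one_pow, mul_one, Nat.add_sub_cancel_left]

/-- Let `R` be a commutative `ℚ`-algebra, `x ∈ R` a unit and `s ∈ R` with `s^(n+1) = 0`.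
With `Δ = x · Σ_{k=0}^{n} (1/2 choose k) (s·x⁻²)^k`, one has
`Δ^(2n+1) = Σ_{k=0}^{n} (n + 1/2 choose k) x^(2n+1−2k) s^k`; in particular `Δ^(2n+1)`
involves only nonnegative powers of `x`. -/
theorem binomial_sqrt_pow_odd_polynomial
    {R : Type*} [CommRing R] [Algebra ℚ R] (n : ℕ)
    (x : R) (hx : IsUnit x) (s : R) (hs : s ^ (n + 1) = 0) :
    (x * ∑ k ∈ Finset.range (n + 1),
        algebraMap ℚ R (ratChoose (1 / 2) k) * (s * ((hx.unit⁻¹ : Rˣ) : R) ^ 2) ^ k)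
        ^ (2 * n + 1)
      = ∑ k ∈ Finset.range (n + 1),
          algebraMap ℚ R (ratChoose ((n : ℚ) + 1 / 2) k) * x ^ (2 * n + 1 - 2 * k) * s ^ k := by
  have hu : (s * ((hx.unit⁻¹ : Rˣ) : R) ^ 2) ^ (n + 1) = 0 := by rw [mul_pow, hs, zero_mul]
  have hexp : (2 * n + 1) • (1 / 2 : ℚ) = n + 1 / 2 := by
    rw [nsmul_eq_mul]; push_cast; ring
  rw [mul_pow, sum_ratChoose_pow_of_pow_eq_zero hu, hexp, mul_sum]
  refine sum_congr rfl fun k hk => ?_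
  have h2k : 2 * k ≤ 2 * n + 1 := by have := mem_range.1 hk; omega
  rw [mul_left_comm, hx.pow_mul_mul_inv_sq_pow s h2k, mul_assoc]
end

section
/- Let m ≥ 2 and let S be the polynomial ring over ℂ in the variables X_{ij} for 1 ≤ i ≤ j ≤ m. Let X be the symmetric m×m matrix over S with (i,j)-entry X_{min(i,j),max(i,j)}. Then the ideal of S generated by all (m−1)×(m−1) minors of X has height at least 2. -/
/-!
In a UFD every nonzero prime `P` contains a prime element `f`, giving a chain `0 < (f) ≤ P`;
if some elements of `P` have no common non-unit factor then `(f) ≠ P`, so `P` has height at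
least 2. The principal `(m-1)`-minors of the generic symmetric matrix have no common non-unit
factor: the minor omitting row and column `k` is a nonzero polynomial (it specialises to `1` at
the identity matrix) involving no variable `X_{kj}`, and a factor of a nonzero polynomial
involves only variables of that polynomial.
-/

/-- The height of an ideal `I` of a commutative ring: the infimum of the heights (in the
prime spectrum, ordered by inclusion) of the prime ideals containing `I`. -/
noncomputable def idealHeight {R : Type*} [CommRing R] (I : Ideal R) : ℕ∞ :=
  ⨅ (P : PrimeSpectrum R) (_ : I ≤ P.asIdeal), Order.height P

open MvPolynomial

theorem two_le_idealHeight_span_of_forall_dvd_isUnit {R : Type*} [CommRing R] [IsDomain R]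
    [UniqueFactorizationMonoid R] {s : Set R} (hs : ∀ d, (∀ a ∈ s, d ∣ a) → IsUnit d) :
    2 ≤ idealHeight (Ideal.span s) := by
  refine le_iInf₂ fun P hP => ?_
  have hsP : ∀ a ∈ s, a ∈ P.asIdeal := fun a ha => hP (Ideal.subset_span ha)
  have hP0 : P.asIdeal ≠ ⊥ := fun h =>
    not_isUnit_zero <| hs 0 fun a ha => zero_dvd_iff.mpr <| (Ideal.mem_bot).mp (h ▸ hsP a ha)
  obtain ⟨f, hfP, hf⟩ := P.isPrime.exists_mem_prime_of_ne_bot hP0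
  let P₀ : PrimeSpectrum R := ⟨⊥, Ideal.isPrime_bot⟩
  let P₁ : PrimeSpectrum R := ⟨Ideal.span {f}, (Ideal.span_singleton_prime hf.ne_zero).mpr hf⟩
  have h₀₁ : P₀ < P₁ := by
    rw [← PrimeSpectrum.asIdeal_lt_asIdeal]
    exact bot_lt_iff_ne_bot.mpr (Ideal.span_singleton_eq_bot.not.mpr hf.ne_zero)
  have h₁ : P₁ < P := by
    rw [← PrimeSpectrum.asIdeal_lt_asIdeal]
    refine lt_of_le_of_ne (Ideal.span_singleton_le_iff_mem _ |>.mpr hfP) fun h => ?_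
    exact hf.not_isUnit <| hs f fun a ha =>
      Ideal.mem_span_singleton.mp (h ▸ hsP a ha : a ∈ P₁.asIdeal)
  exact Order.add_one_le_of_lt (Order.one_lt_height_iff.mpr ⟨P₁, P₀, h₀₁, h₁⟩)

namespace MvPolynomial

variable {σ R : Type*} [CommRing R]

theorem vars_subset_of_dvd [IsDomain R] {f g : MvPolynomial σ R} (hg : g ≠ 0) (h : f ∣ g) :
    f.vars ⊆ g.vars := by
  obtain ⟨q, rfl⟩ := h
  intro v hv
  rw [mem_vars_iff_degreeOf_ne_zero] at hv ⊢
  rw [degreeOf_mul_eq (left_ne_zero_of_mul hg) (right_ne_zero_of_mul hg)]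
  omega

theorem isUnit_of_forall_dvd {K ι : Type*} [Field K] [Nonempty ι] {g : ι → MvPolynomial σ K}
    (hg : ∀ i, g i ≠ 0) (hvars : ∀ v, ∃ i, v ∉ (g i).vars) {d : MvPolynomial σ K}
    (hd : ∀ i, d ∣ g i) : IsUnit d := by
  have hd0 : d ≠ 0 := fun h => hg (Classical.arbitrary ι) (zero_dvd_iff.mp (h ▸ hd _))
  have hC : d = C (d.coeff 0) := vars_eq_empty_iff_eq_C.mp <| Finset.eq_empty_of_forall_notMem
    fun v hv => (hvars v).elim fun i hi => hi (vars_subset_of_dvd (hg i) (hd i) hv)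
  rw [hC] at hd0 ⊢
  exact (isUnit_iff_ne_zero.mpr fun h => hd0 (by rw [h, C_0])).map C

end MvPolynomial

section GenericSymmetricMatrix

variable (R : Type*) [CommRing R]

noncomputable def genericSymmetricMatrix (m : ℕ) :
    Matrix (Fin m) (Fin m) (MvPolynomial {p : Fin m × Fin m // p.1 ≤ p.2} R) :=
  fun i j => X ⟨(min i j, max i j), min_le_max⟩

theorem genericSymmetricMatrix_map_eval_isDiag (m : ℕ) :
    (genericSymmetricMatrix R m).map (eval fun u => if u.1.1 = u.1.2 then 1 else 0) = 1 := by
  ext i j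
  simp [genericSymmetricMatrix, Matrix.one_apply, ← inf_eq_sup]

theorem det_genericSymmetricMatrix_ne_zero [Nontrivial R] (m : ℕ) :
    (genericSymmetricMatrix R m).det ≠ 0 := fun h => by
  have := congrArg (eval fun u : {p : Fin m × Fin m // p.1 ≤ p.2} =>
    if u.1.1 = u.1.2 then (1 : R) else 0) h
  rw [RingHom.map_det, RingHom.mapMatrix_apply, genericSymmetricMatrix_map_eval_isDiag,
    Matrix.det_one, map_zero] at this
  exact one_ne_zero this

end GenericSymmetricMatrix

section GenericSymmetricMatrixMinors

variable (R : Type*) [CommRing R] {n m : ℕ}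

def symmetricIndexMap (e : Fin n ↪o Fin m) :
    {p : Fin n × Fin n // p.1 ≤ p.2} → {p : Fin m × Fin m // p.1 ≤ p.2} :=
  fun p => ⟨(e p.1.1, e p.1.2), e.monotone p.2⟩

theorem symmetricIndexMap_injective (e : Fin n ↪o Fin m) :
    Function.Injective (symmetricIndexMap e) := fun p q h => by
  simp only [symmetricIndexMap, Subtype.mk.injEq, Prod.mk.injEq, e.injective.eq_iff] at h
  exact Subtype.ext (Prod.ext h.1 h.2)

theorem genericSymmetricMatrix_submatrix (e : Fin n ↪o Fin m) :
    (genericSymmetricMatrix R m).submatrix e e =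
      (genericSymmetricMatrix R n).map (rename (symmetricIndexMap e)) := by
  ext i j
  simp [genericSymmetricMatrix, symmetricIndexMap, e.monotone.map_min, e.monotone.map_max]

theorem det_genericSymmetricMatrix_submatrix (e : Fin n ↪o Fin m) :
    ((genericSymmetricMatrix R m).submatrix e e).det =
      rename (symmetricIndexMap e) (genericSymmetricMatrix R n).det := by
  rw [genericSymmetricMatrix_submatrix, AlgHom.map_det]
  rfl

theorem det_genericSymmetricMatrix_submatrix_ne_zero [Nontrivial R] (e : Fin n ↪o Fin m) :
    ((genericSymmetricMatrix R m).submatrix e e).det ≠ 0 := by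
  rw [det_genericSymmetricMatrix_submatrix]
  exact (map_ne_zero_iff _ (rename_injective _ (symmetricIndexMap_injective e))).mpr
    (det_genericSymmetricMatrix_ne_zero R n)

theorem mem_range_of_mem_vars_det_genericSymmetricMatrix_submatrix (e : Fin n ↪o Fin m)
    {v : {p : Fin m × Fin m // p.1 ≤ p.2}}
    (hv : v ∈ ((genericSymmetricMatrix R m).submatrix e e).det.vars) : v.1.1 ∈ Set.range e := by
  classical
  rw [det_genericSymmetricMatrix_submatrix] at hv
  obtain ⟨u, -, rfl⟩ := Finset.mem_image.mp (vars_rename _ _ hv)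
  exact ⟨u.1.1, rfl⟩

end GenericSymmetricMatrixMinors

theorem genericSymmetricMatrix_subMinors_height_ge_two_general (m : ℕ) :
    2 ≤ idealHeight (Ideal.span
      { d : MvPolynomial {p : Fin m × Fin m // p.1 ≤ p.2} ℂ |
        ∃ (r c : Fin (m - 1) ↪ Fin m),
          d = Matrix.det (fun i j : Fin (m - 1) =>
            MvPolynomial.X ⟨(min (r i) (c j), max (r i) (c j)), min_le_max⟩) }) := by
  refine two_le_idealHeight_span_of_forall_dvd_isUnit fun d hd => ?_
  cases m with
  -- `0 - 1 = 0`, so the empty minor `1` is among the generators.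
  | zero => exact isUnit_of_dvd_one (hd 1 ⟨.refl _, .refl _, Matrix.det_fin_zero.symm⟩)
  | succ n =>
    let minor (k : Fin (n + 1)) :=
      ((genericSymmetricMatrix ℂ (n + 1)).submatrix (Fin.succAboveOrderEmb k)
        (Fin.succAboveOrderEmb k)).det
    refine isUnit_of_forall_dvd (g := minor)
      (fun k => det_genericSymmetricMatrix_submatrix_ne_zero ℂ _)
      (fun v => ⟨v.1.1, fun hv => ?_⟩)
      fun k => hd _ ⟨(Fin.succAboveOrderEmb k).toEmbedding, _, rfl⟩
    obtain ⟨i, hi⟩ := mem_range_of_mem_vars_det_genericSymmetricMatrix_submatrix ℂ _ hv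
    exact Fin.succAbove_ne _ _ hi

/-- Let `m ≥ 2` and let `S` be the polynomial ring over `ℂ` in variables `X_{ij}`,
`i ≤ j`. Let `X` be the generic symmetric `m×m` matrix, with `(i,j)`-entry
`X_{min(i,j), max(i,j)}`. Then the ideal generated by all `(m−1)×(m−1)` minors of `X`
has height at least 2. -/
theorem genericSymmetricMatrix_subMinors_height_ge_two (m : ℕ) (hm : 2 ≤ m) :
    2 ≤ idealHeight (Ideal.span
      { d : MvPolynomial {p : Fin m × Fin m // p.1 ≤ p.2} ℂ |
        ∃ (r c : Fin (m - 1) ↪ Fin m),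
          d = Matrix.det (fun i j : Fin (m - 1) =>
            MvPolynomial.X ⟨(min (r i) (c j), max (r i) (c j)), min_le_max⟩) }) :=
  genericSymmetricMatrix_subMinors_height_ge_two_general m
end

section
/- Let n ≥ 2 and let S be the polynomial ring over ℂ in the variables X_{ij} for 1 ≤ i, j ≤ n (i.e. MvPolynomial (Fin n × Fin n) ℂ). Let X be the n×n matrix over S with (i,j)-entry X_{ij}. Then the ideal of S generated by all (n−1)×(n−1) minors of X has height at least 2. -/
open MvPolynomial

namespace GenMinorAux

variable {σ : Type*} [Fintype σ] [DecidableEq σ]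

omit [DecidableEq σ] in
lemma degreeOf_mul_eq_add (v : σ) {p q : MvPolynomial σ ℂ} (hp : p ≠ 0) (hq : q ≠ 0) :
    (p * q).degreeOf v = p.degreeOf v + q.degreeOf v := by
  obtain ⟨k, hk⟩ : ∃ k, Fintype.card σ = k + 1 :=
    ⟨Fintype.card σ - 1, (Nat.succ_pred_eq_of_pos (Fintype.card_pos_iff.mpr ⟨v⟩)).symm⟩
  let e0 : σ ≃ Fin (k + 1) := Fintype.equivFinOfCardEq hk
  let e : σ ≃ Fin (k + 1) := e0.trans (Equiv.swap (e0 v) 0)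
  have hev : e v = 0 := by simp [e, Equiv.swap_apply_left]
  have key : ∀ r : MvPolynomial σ ℂ,
      r.degreeOf v = ((finSuccEquiv ℂ k) (rename e r)).natDegree := by
    intro r
    rw [natDegree_finSuccEquiv, ← hev,
      MvPolynomial.degreeOf_rename_of_injective e.injective]
  have hne : ∀ r : MvPolynomial σ ℂ, r ≠ 0 → (finSuccEquiv ℂ k) (rename e r) ≠ 0 := by
    intro r hr h
    apply hr
    have h2 : rename e r = 0 := (finSuccEquiv ℂ k).injective (by simpa using h)
    have := MvPolynomial.rename_injective (R := ℂ) e e.injective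
    exact this (by simpa using h2)
  rw [key, key, key, map_mul, map_mul, Polynomial.natDegree_mul (hne p hp) (hne q hq)]

omit [DecidableEq σ] in
lemma degreeOf_eq_zero_of_dvd {v : σ} {p F : MvPolynomial σ ℂ}
    (hdvd : p ∣ F) (hF : F ≠ 0) (h : F.degreeOf v = 0) : p.degreeOf v = 0 := by
  obtain ⟨q, rfl⟩ := hdvd
  have hp : p ≠ 0 := left_ne_zero_of_mul hF
  have hq : q ≠ 0 := right_ne_zero_of_mul hF
  have := degreeOf_mul_eq_add v hp hq
  omega

end GenMinorAux

namespace GenMinorAux2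
open GenMinorAux

lemma minor_ne_zero {n m : ℕ} (r c : Fin m ↪ Fin n) :
    Matrix.det (fun i j : Fin m => (X (r i, c j) : MvPolynomial (Fin n × Fin n) ℂ)) ≠ 0 := by
  classical
  intro h0
  set φ : (Fin n × Fin n) → ℂ := fun w => if ∃ k, r k = w.1 ∧ c k = w.2 then (1 : ℂ) else 0
  have h1 := congrArg (eval φ) h0
  erw [map_zero, RingHom.map_det] at h1
  have h2 : (Matrix.of fun i j : Fin m => (X (r i, c j) : MvPolynomial (Fin n × Fin n) ℂ)).map
      (eval φ) = 1 := by
    ext i j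
    simp only [Matrix.map_apply, Matrix.of_apply, eval_X, Matrix.one_apply, φ]
    by_cases h : i = j
    · subst h
      rw [if_pos ⟨i, rfl, rfl⟩, if_pos rfl]
    · rw [if_neg, if_neg h]
      rintro ⟨k, hk1, hk2⟩
      exact h ((r.injective hk1).symm.trans (c.injective hk2))
  rw [show ((eval φ).mapMatrix fun i j : Fin m => (X (r i, c j) : MvPolynomial (Fin n × Fin n) ℂ))
    = (Matrix.of fun i j : Fin m => (X (r i, c j) : MvPolynomial (Fin n × Fin n) ℂ)).map
      (eval φ) from rfl, h2, Matrix.det_one] at h1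
  exact one_ne_zero (α := ℂ) h1

lemma degreeOf_minor_eq_zero {n m : ℕ} (r c : Fin m ↪ Fin n) (v : Fin n × Fin n)
    (hv : ∀ a, r a ≠ v.1) :
    (Matrix.det (fun i j : Fin m =>
      (X (r i, c j) : MvPolynomial (Fin n × Fin n) ℂ))).degreeOf v = 0 := by
  classical
  erw [Matrix.det_apply']
  refine Nat.le_zero.mp ?_
  refine le_trans (degreeOf_sum_le _ _ _) ?_
  refine Finset.sup_le fun σ' _ => ?_
  refine le_trans (degreeOf_mul_le _ _ _) ?_
  have hc : ((((Equiv.Perm.sign σ' : ℤˣ) : ℤ) : MvPolynomial (Fin n × Fin n) ℂ))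
      = C (((Equiv.Perm.sign σ' : ℤˣ) : ℤ) : ℂ) := rfl
  rw [hc, degreeOf_C, zero_add]
  refine le_trans (degreeOf_prod_le _ _ _) ?_
  refine le_of_eq (Finset.sum_eq_zero fun i _ => ?_)
  rw [degreeOf_X, if_neg]
  intro h
  exact hv (σ' i) (congrArg Prod.fst h).symm

end GenMinorAux2

namespace GenMinorAux3
open GenMinorAux GenMinorAux2

/-- An embedding `Fin (n-1) ↪ Fin n` avoiding a given index `i`. -/
noncomputable def avoidEmb {n : ℕ} (hn : 2 ≤ n) (i : Fin n) : Fin (n - 1) ↪ Fin n :=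
  have h : n - 1 + 1 = n := Nat.sub_add_cancel (by omega)
  (Fin.succAboveEmb (Fin.cast h.symm i)).trans (finCongr h).toEmbedding

lemma avoidEmb_ne {n : ℕ} (hn : 2 ≤ n) (i : Fin n) (a : Fin (n - 1)) :
    avoidEmb hn i a ≠ i := by
  have h : n - 1 + 1 = n := Nat.sub_add_cancel (by omega)
  intro hcon
  apply Fin.succAbove_ne (Fin.cast h.symm i) a
  have := congrArg (Fin.cast h.symm) hcon
  simpa [avoidEmb] using this

lemma not_minors_le_span_prime {n : ℕ} (hn : 2 ≤ n)
    {π : MvPolynomial (Fin n × Fin n) ℂ} (hπ : Prime π)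
    (h : Ideal.span { d : MvPolynomial (Fin n × Fin n) ℂ |
        ∃ (r c : Fin (n - 1) ↪ Fin n),
          d = Matrix.det (fun i j : Fin (n - 1) =>
            MvPolynomial.X (r i, c j)) } ≤ Ideal.span {π}) : False := by
  classical
  have hdvd : ∀ (r c : Fin (n - 1) ↪ Fin n),
      π ∣ Matrix.det (fun i j : Fin (n - 1) =>
        (X (r i, c j) : MvPolynomial (Fin n × Fin n) ℂ)) := fun r c =>
    Ideal.mem_span_singleton.mp (h (Ideal.subset_span ⟨r, c, rfl⟩))
  have hdeg : ∀ v : Fin n × Fin n, π.degreeOf v = 0 := by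
    intro v
    exact degreeOf_eq_zero_of_dvd (hdvd (avoidEmb hn v.1) (avoidEmb hn v.2))
      (minor_ne_zero _ _) (degreeOf_minor_eq_zero _ _ v (fun a => avoidEmb_ne hn v.1 a))
  -- π is a nonzero constant, hence a unit; contradiction
  have hsupp : ∀ m ∈ π.support, m = 0 := by
    intro m hm
    ext v
    have := (degreeOf_le_iff (n := v) (f := π) (d := 0)).mp (le_of_eq (hdeg v)) m hm
    simpa using this
  have hC : π = C (coeff 0 π) := by
    apply MvPolynomial.ext
    intro m
    by_cases hm : m = 0
    · simp [hm]
    · rw [coeff_C, if_neg (fun hh => hm hh.symm)]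
      by_contra hne
      exact hm (hsupp m (mem_support_iff.mpr hne))
  have hc0 : coeff 0 π ≠ 0 := by
    intro h0
    apply hπ.ne_zero
    rw [hC, h0, map_zero]
  exact hπ.not_unit (hC ▸ (IsUnit.map (C : ℂ →+* MvPolynomial (Fin n × Fin n) ℂ)
    (isUnit_iff_ne_zero.mpr hc0)))

end GenMinorAux3

/-- Let `n ≥ 2` and let `S = MvPolynomial (Fin n × Fin n) ℂ`, and let `X` be the generic
`n×n` matrix with `(i,j)`-entry the variable `X_{ij}`. Then the ideal generated by all
`(n−1)×(n−1)` minors of `X` has height at least 2. -/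
theorem genericMatrix_subMinors_height_ge_two (n : ℕ) (hn : 2 ≤ n) :
    2 ≤ idealHeight (Ideal.span
      { d : MvPolynomial (Fin n × Fin n) ℂ |
        ∃ (r c : Fin (n - 1) ↪ Fin n),
          d = Matrix.det (fun i j : Fin (n - 1) =>
            MvPolynomial.X (r i, c j)) }) := by
  classical
  unfold idealHeight
  refine le_iInf fun P => le_iInf fun hP => ?_
  have hm1 : n - 1 ≤ n := by omega
  let r0 : Fin (n - 1) ↪ Fin n := Fin.castLEEmb hm1
  have hf_mem : Matrix.det (fun i j : Fin (n - 1) =>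
      (MvPolynomial.X (r0 i, r0 j) : MvPolynomial (Fin n × Fin n) ℂ)) ∈
      Ideal.span { d : MvPolynomial (Fin n × Fin n) ℂ |
        ∃ (r c : Fin (n - 1) ↪ Fin n),
          d = Matrix.det (fun i j : Fin (n - 1) =>
            MvPolynomial.X (r i, c j)) } := Ideal.subset_span ⟨r0, r0, rfl⟩
  have hPbot : P.asIdeal ≠ ⊥ := by
    intro hb
    have hmem := hP hf_mem
    rw [hb, Ideal.mem_bot] at hmem
    exact GenMinorAux2.minor_ne_zero r0 r0 hmem
  obtain ⟨π, hπP, hπ⟩ := P.isPrime.exists_mem_prime_of_ne_bot hPbot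
  have hlt1 : (⊥ : Ideal (MvPolynomial (Fin n × Fin n) ℂ)) < Ideal.span {π} := by
    rw [bot_lt_iff_ne_bot, Ne, Ideal.span_singleton_eq_bot]
    exact hπ.ne_zero
  have hle : Ideal.span {π} ≤ P.asIdeal := (Ideal.span_singleton_le_iff_mem _).mpr hπP
  have hlt2 : Ideal.span {π} < P.asIdeal :=
    lt_of_le_of_ne hle (fun he => absurd (he ▸ hP)
      (fun hcon => GenMinorAux3.not_minors_le_span_prime hn hπ hcon))
  let p0 : PrimeSpectrum (MvPolynomial (Fin n × Fin n) ℂ) := ⟨⊥, Ideal.bot_prime⟩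
  let p1 : PrimeSpectrum (MvPolynomial (Fin n × Fin n) ℂ) :=
    ⟨Ideal.span {π}, (Ideal.span_singleton_prime hπ.ne_zero).mpr hπ⟩
  have h01 : p0 < p1 := (PrimeSpectrum.asIdeal_lt_asIdeal p0 p1).mp hlt1
  have h12 : p1 < P := (PrimeSpectrum.asIdeal_lt_asIdeal p1 P).mp hlt2
  let ch0 := (RelSeries.singleton {(a, b) : PrimeSpectrum (MvPolynomial (Fin n × Fin n) ℂ) ×
      PrimeSpectrum (MvPolynomial (Fin n × Fin n) ℂ) | a < b} p0).snoc p1 h01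
  let ch : LTSeries (PrimeSpectrum (MvPolynomial (Fin n × Fin n) ℂ)) :=
    ch0.snoc P (by rw [show ch0.last = p1 from RelSeries.last_snoc _ _ _]; exact h12)
  have hlast : ch.last = P := RelSeries.last_snoc _ _ _
  have hlen : ch.length = 2 := rfl
  have := Order.length_le_height_last (p := ch)
  rw [hlast, hlen] at this
  exact_mod_cast this
end

section
/- Let R be a commutative ring, f ∈ R, and let R_f denote the localization of R at the powers of f. Let δ ∈ R_f, and assume there exists h ∈ R such that (i) δ − h/1 is nilpotent in R_f, and (ii) h lies in the radical of the ideal (f) of R. Then there exists N₀ such that for every N ≥ N₀, the power δ^N lies in the image of the localization map R → R_f. -/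
/-!
Write `δ = h + ε` with `ε` nilpotent. Since `h ∈ √(f)`, a power of `h` is a multiple of `f`,
so some power `h ^ L` clears the denominator of `ε`: `h ^ L * ε` comes from `R`. In the binomial
expansion of `(h + ε) ^ N` the terms with `ε ^ i`, `i ≥ n`, vanish, and for `N` large every other
term carries at least `h ^ (L * i) * ε ^ i = (h ^ L * ε) ^ i`, hence comes from `R`.
-/

theorem Subring.add_pow_mem_of_pow_mul_mem {S : Type*} [CommRing S] (A : Subring S) {x y : S}
    {L n : ℕ} (hx : x ∈ A) (hxy : x ^ L * y ∈ A) (hy : y ^ n = 0) :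
    ∀ N, (L + 1) * n ≤ N → (x + y) ^ N ∈ A := by
  intro N hN
  rw [add_pow]
  refine A.sum_mem fun j hj => ?_
  rcases le_or_gt n (N - j) with hnj | hjn
  · rw [← Nat.sub_add_cancel hnj, pow_add, hy, mul_zero, mul_zero, zero_mul]
    exact A.zero_mem
  · have hLj : L * (N - j) ≤ j := by
      have hL := Nat.mul_le_mul_left L hjn.le
      have hjN := Nat.sub_add_cancel (Nat.le_of_lt_succ (Finset.mem_range.mp hj))
      nlinarith
    have hterm : x ^ j * y ^ (N - j) = x ^ (j - L * (N - j)) * (x ^ L * y) ^ (N - j) := by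
      rw [mul_pow, ← pow_mul, ← mul_assoc, ← pow_add, Nat.sub_add_cancel hLj]
    rw [hterm]
    exact A.mul_mem (A.mul_mem (A.pow_mem hx _) (A.pow_mem hxy _)) (natCast_mem A _)

theorem IsLocalization.Away.exists_pow_mul_mem_range_of_mem_radical {R S : Type*} [CommRing R]
    [CommRing S] [Algebra R S] {f h : R} [IsLocalization.Away f S]
    (hh : h ∈ (Ideal.span {f}).radical) (z : S) :
    ∃ L, algebraMap R S h ^ L * z ∈ (algebraMap R S).range := by
  obtain ⟨K, hK⟩ := hh
  obtain ⟨c, hc⟩ := Ideal.mem_span_singleton'.mp hK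
  obtain ⟨m, a, ha⟩ := IsLocalization.Away.surj f z
  refine ⟨K * m, c ^ m * a, ?_⟩
  rw [pow_mul, ← map_pow, ← hc, map_mul, map_mul, map_pow, ← ha]
  ring

/-- Let `R` be a commutative ring, `f ∈ R`, `R_f` the localization away from `f`, and
`δ ∈ R_f`. If there is `h ∈ R` with `δ − h/1` nilpotent in `R_f` and `h` in the radical
of the ideal `(f)`, then all large enough powers `δ^N` lie in the image of `R → R_f`. -/
theorem pow_mem_image_of_localization
    {R : Type*} [CommRing R] (f : R) (δ : Localization.Away f) (h : R)
    (h1 : IsNilpotent (δ - algebraMap R (Localization.Away f) h))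
    (h2 : h ∈ (Ideal.span {f}).radical) :
    ∃ N₀ : ℕ, ∀ N : ℕ, N₀ ≤ N →
      ∃ r : R, algebraMap R (Localization.Away f) r = δ ^ N := by
  obtain ⟨n, hn⟩ := h1
  obtain ⟨L, hL⟩ := IsLocalization.Away.exists_pow_mul_mem_range_of_mem_radical h2
    (δ - algebraMap R (Localization.Away f) h)
  refine ⟨(L + 1) * n, fun N hN => ?_⟩
  have := (algebraMap R (Localization.Away f)).range.add_pow_mem_of_pow_mul_mem
    ⟨h, rfl⟩ hL hn N hN
  rwa [add_sub_cancel] at this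
end
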